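/- Fix α' ∈ (0,1) and a positive integer N, and consider the Erdős–Rényi random graph G = G(n, n^{−α'}). Then the probability that G contains a subgraph K with |V(K)| ≤ N and |V(K)| − α'·|E(K)| < −1 is O(n^{−1}) as n → ∞. -/

import Mathlib

open MeasureTheory Filter

noncomputable def bernoulliBool (p : ℝ) : Measure Bool :=
  ENNReal.ofReal p • Measure.dirac true + ENNReal.ofReal (1 - p) • Measure.dirac false

noncomputable def erMeasure (n : ℕ) (p : ℝ) : Measure (Fin n → Fin n → Bool) :=
  Measure.pi fun _ => Measure.pi fun _ => bernoulliBool p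

lemma bernoulliBool_true (p : ℝ) : bernoulliBool p {true} = ENNReal.ofReal p := by
  simp [bernoulliBool, Measure.dirac_apply]

lemma bernoulliBool_prob (p : ℝ) (h0 : 0 ≤ p) (h1 : p ≤ 1) :
    IsProbabilityMeasure (bernoulliBool p) := by
  constructor
  have : bernoulliBool p Set.univ = ENNReal.ofReal p + ENNReal.ofReal (1 - p) := by
    simp [bernoulliBool]
  rw [this, ← ENNReal.ofReal_add h0 (by linarith)]
  norm_num

lemma cyl_eq (n : ℕ) (E : Finset (Fin n × Fin n)) :
    {G : Fin n → Fin n → Bool | ∀ e ∈ E, G e.1 e.2 = true} =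
      Set.univ.pi (fun i => Set.univ.pi
        (fun j => if (i, j) ∈ E then ({true} : Set Bool) else Set.univ)) := by
  ext G
  simp only [Set.mem_setOf_eq, Set.mem_pi, Set.mem_univ, forall_true_left]
  constructor
  · intro h i j
    split_ifs with hij
    · exact h (i, j) hij
    · trivial
  · intro h e he
    have := h e.1 e.2
    rw [if_pos (by simpa using he)] at this
    exact this

lemma cyl_measure (n : ℕ) (p : ℝ) (h0 : 0 ≤ p) (h1 : p ≤ 1) (E : Finset (Fin n × Fin n)) :
    erMeasure n p {G | ∀ e ∈ E, G e.1 e.2 = true} = (ENNReal.ofReal p) ^ E.card := by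
  haveI := bernoulliBool_prob p h0 h1
  rw [cyl_eq, erMeasure, Measure.pi_pi]
  simp_rw [Measure.pi_pi]
  have key : ∀ i j : Fin n,
      bernoulliBool p (if (i, j) ∈ E then ({true} : Set Bool) else Set.univ)
        = if (i, j) ∈ E then ENNReal.ofReal p else 1 := by
    intro i j
    split_ifs
    · exact bernoulliBool_true p
    · exact measure_univ
  simp_rw [key]
  rw [← Finset.prod_product']
  have : ∀ x : Fin n × Fin n, (if (x.1, x.2) ∈ E then ENNReal.ofReal p else 1)
      = if x ∈ E then ENNReal.ofReal p else 1 := by intro x; rfl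
  simp_rw [this]
  rw [Finset.univ_product_univ, Finset.prod_ite_mem, Finset.univ_inter, Finset.prod_const]

lemma sum_union_le'' {β : Type*} [DecidableEq β] (u v : Finset β) (f : β → ENNReal) :
    ∑ x ∈ u ∪ v, f x ≤ ∑ x ∈ u, f x + ∑ x ∈ v, f x := by
  rw [← Finset.union_sdiff_self_eq_union, Finset.sum_union Finset.disjoint_sdiff]
  exact add_le_add le_rfl (Finset.sum_le_sum_of_subset (Finset.sdiff_subset))

lemma sum_biUnion_le' {α β : Type*} [DecidableEq β] (s : Finset α) (t : α → Finset β)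
    (f : β → ENNReal) : ∑ x ∈ s.biUnion t, f x ≤ ∑ a ∈ s, ∑ x ∈ t a, f x := by
  classical
  induction s using Finset.induction_on with
  | empty => simp
  | insert a s h ih =>
    rw [Finset.biUnion_insert, Finset.sum_insert h]
    exact le_trans (sum_union_le'' _ _ _) (add_le_add le_rfl ih)

theorem stmt10 (α' : ℝ) (hα₁ : 0 < α') (hα₂ : α' < 1) (N : ℕ) :
    ∃ C : ℝ, ∀ᶠ n : ℕ in atTop,
      erMeasure n ((n : ℝ) ^ (-α'))
        {G | ∃ (S : Finset (Fin n)) (E : Finset (Fin n × Fin n)),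
          S.card ≤ N ∧
          (∀ e ∈ E, e.1 < e.2 ∧ e.1 ∈ S ∧ e.2 ∈ S ∧ G e.1 e.2 = true) ∧
          (S.card : ℝ) - α' * (E.card : ℝ) < -1}
      ≤ ENNReal.ofReal (C / (n : ℝ)) := by
  classical
  refine ⟨((N : ℝ) + 1) * 2 ^ (N * N), ?_⟩
  filter_upwards [eventually_ge_atTop 1] with n hn
  have hn1 : (1 : ℝ) ≤ (n : ℝ) := by exact_mod_cast hn
  have hn0 : (0 : ℝ) < (n : ℝ) := by linarith
  set p : ℝ := (n : ℝ) ^ (-α') with hp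
  have hp0 : 0 ≤ p := Real.rpow_nonneg (le_of_lt hn0) _
  have hp1 : p ≤ 1 := Real.rpow_le_one_of_one_le_of_nonpos hn1 (by linarith)
  set edges : Finset (Fin n) → Finset (Fin n × Fin n) :=
    fun S => (S ×ˢ S).filter fun e => e.1 < e.2 with hedges
  set A : Finset (Finset (Fin n) × Finset (Fin n × Fin n)) :=
    Finset.univ.filter fun x => x.1.card ≤ N ∧ x.2 ⊆ edges x.1 ∧
      (x.1.card : ℝ) - α' * (x.2.card : ℝ) < -1 with hA
  set h : Finset (Fin n) × Finset (Fin n × Fin n) → ENNReal :=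
    fun x => ENNReal.ofReal ((n : ℝ) ^ (-((x.1.card : ℝ) + 1))) with hh
  -- step 1: event contained in finite union of cylinders
  have hsub : {G : Fin n → Fin n → Bool | ∃ (S : Finset (Fin n)) (E : Finset (Fin n × Fin n)),
        S.card ≤ N ∧ (∀ e ∈ E, e.1 < e.2 ∧ e.1 ∈ S ∧ e.2 ∈ S ∧ G e.1 e.2 = true) ∧
        (S.card : ℝ) - α' * (E.card : ℝ) < -1} ⊆
      ⋃ x ∈ A, {G : Fin n → Fin n → Bool | ∀ e ∈ x.2, G e.1 e.2 = true} := by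
    rintro G ⟨S, E, hcard, hE, hlt⟩
    refine Set.mem_biUnion (show (S, E) ∈ A from ?_) (fun e he => (hE e he).2.2.2)
    rw [hA, Finset.mem_filter]
    refine ⟨Finset.mem_univ _, hcard, ?_, hlt⟩
    intro e he
    obtain ⟨h1, h2, h3, _⟩ := hE e he
    rw [hedges]
    simp only [Finset.mem_filter, Finset.mem_product]
    exact ⟨⟨h2, h3⟩, h1⟩
  -- step 2: each cylinder has small measure
  have hterm : ∀ x ∈ A,
      erMeasure n p {G : Fin n → Fin n → Bool | ∀ e ∈ x.2, G e.1 e.2 = true} ≤ h x := by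
    intro x hx
    rw [cyl_measure n p hp0 hp1, ← ENNReal.ofReal_pow hp0]
    rw [hA, Finset.mem_filter] at hx
    obtain ⟨-, -, -, hlt⟩ := hx
    apply ENNReal.ofReal_le_ofReal
    rw [hp, ← Real.rpow_natCast ((n : ℝ) ^ (-α')) x.2.card, ← Real.rpow_mul (le_of_lt hn0)]
    apply Real.rpow_le_rpow_of_exponent_le hn1
    nlinarith
  -- step 3: counting
  set B : Finset (Finset (Fin n) × Finset (Fin n × Fin n)) :=
    (Finset.range (N + 1)).biUnion fun s =>
      (Finset.powersetCard s Finset.univ).biUnion fun S =>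
        ((edges S).powerset).image fun E => (S, E) with hB
  have hAB : A ⊆ B := by
    intro x hx
    rw [hA, Finset.mem_filter] at hx
    obtain ⟨-, hcard, hsubE, -⟩ := hx
    rw [hB]
    refine Finset.mem_biUnion.2 ⟨x.1.card, Finset.mem_range.2 (Nat.lt_succ_of_le hcard), ?_⟩
    refine Finset.mem_biUnion.2 ⟨x.1, Finset.mem_powersetCard_univ.2 rfl, ?_⟩
    exact Finset.mem_image.2 ⟨x.2, Finset.mem_powerset.2 hsubE, rfl⟩
  have hinj : ∀ S : Finset (Fin n), Set.InjOn (fun E => (S, E))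
      ((edges S).powerset : Set (Finset (Fin n × Fin n))) := by
    intro S E1 _ E2 _ hEq
    exact congrArg Prod.snd hEq
  -- the final sum bound
  have hsumB : ∑ x ∈ B, h x ≤
      ENNReal.ofReal (((N : ℝ) + 1) * 2 ^ (N * N) / (n : ℝ)) := by
    have key : ∀ s ∈ Finset.range (N + 1),
        ∑ S ∈ Finset.powersetCard s Finset.univ,
          ∑ x ∈ ((edges S).powerset).image (fun E => (S, E)), h x ≤
          ENNReal.ofReal ((2 : ℝ) ^ (N * N) / (n : ℝ)) := by
      intro s hs
      have hsN : s ≤ N := Nat.lt_succ_iff.1 (Finset.mem_range.1 hs)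
      have inner : ∀ S ∈ Finset.powersetCard s Finset.univ,
          ∑ x ∈ ((edges S).powerset).image (fun E => (S, E)), h x ≤
            ((2 ^ (N * N) : ℕ) : ENNReal) * ENNReal.ofReal ((n : ℝ) ^ (-((s : ℝ) + 1))) := by
        intro S hS
        have hScard : S.card = s := Finset.mem_powersetCard_univ.1 hS
        rw [Finset.sum_image (fun E1 _ E2 _ he => congrArg Prod.snd he)]
        have hconst : ∀ E ∈ (edges S).powerset,
            h (S, E) = ENNReal.ofReal ((n : ℝ) ^ (-((s : ℝ) + 1))) := by
          intro E _
          rw [hh]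
          simp only [hScard]
        rw [Finset.sum_congr rfl hconst, Finset.sum_const, Finset.card_powerset, nsmul_eq_mul]
        have hec : (edges S).card ≤ N * N := by
          refine le_trans (le_trans (Finset.card_filter_le _ _) ?_) (Nat.mul_le_mul hsN hsN)
          rw [Finset.card_product, hScard]
        exact mul_le_mul_left (by exact_mod_cast Nat.pow_le_pow_right (by norm_num) hec) _
      calc ∑ S ∈ Finset.powersetCard s Finset.univ,
            ∑ x ∈ ((edges S).powerset).image (fun E => (S, E)), h x
          ≤ ∑ S ∈ Finset.powersetCard s Finset.univ,
            ((2 ^ (N * N) : ℕ) : ENNReal) * ENNReal.ofReal ((n : ℝ) ^ (-((s : ℝ) + 1))) :=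
            Finset.sum_le_sum inner
        _ = (n.choose s : ENNReal) *
            (((2 ^ (N * N) : ℕ) : ENNReal) * ENNReal.ofReal ((n : ℝ) ^ (-((s : ℝ) + 1)))) := by
            rw [Finset.sum_const, nsmul_eq_mul]
            congr 1
            simp [Finset.card_powersetCard]
        _ ≤ (( (n ^ s : ℕ) : ENNReal)) *
            (((2 ^ (N * N) : ℕ) : ENNReal) * ENNReal.ofReal ((n : ℝ) ^ (-((s : ℝ) + 1)))) := by
            exact mul_le_mul_left (by exact_mod_cast Nat.choose_le_pow n s) _
        _ = ENNReal.ofReal ((n : ℝ) ^ (s : ℕ) *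
            ((2 : ℝ) ^ (N * N) * (n : ℝ) ^ (-((s : ℝ) + 1)))) := by
            rw [ENNReal.ofReal_mul (by positivity), ENNReal.ofReal_mul (by positivity)]
            congr 1
            · rw [← ENNReal.ofReal_natCast (n ^ s)]
              congr 1
              push_cast
              ring
            · congr 1
              rw [← ENNReal.ofReal_natCast (2 ^ (N * N))]
              congr 1
              push_cast
              ring
        _ ≤ ENNReal.ofReal ((2 : ℝ) ^ (N * N) / (n : ℝ)) := by
            apply ENNReal.ofReal_le_ofReal
            have : (n : ℝ) ^ (s : ℕ) * (n : ℝ) ^ (-((s : ℝ) + 1)) = (n : ℝ)⁻¹ := by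
              rw [← Real.rpow_natCast (n : ℝ) s, ← Real.rpow_add hn0]
              rw [show (s : ℝ) + -((s : ℝ) + 1) = -1 by ring, Real.rpow_neg_one]
            refine le_of_eq ?_
            calc (n : ℝ) ^ (s : ℕ) * ((2 : ℝ) ^ (N * N) * (n : ℝ) ^ (-((s : ℝ) + 1)))
                = (2 : ℝ) ^ (N * N) * ((n : ℝ) ^ (s : ℕ) * (n : ℝ) ^ (-((s : ℝ) + 1))) := by ring
              _ = (2 : ℝ) ^ (N * N) / (n : ℝ) := by rw [this]; ring
    calc ∑ x ∈ B, h x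
        ≤ ∑ s ∈ Finset.range (N + 1), ∑ S ∈ Finset.powersetCard s Finset.univ,
          ∑ x ∈ ((edges S).powerset).image (fun E => (S, E)), h x := by
          rw [hB]
          refine le_trans (sum_biUnion_le' _ _ _) (Finset.sum_le_sum fun s _ => ?_)
          exact sum_biUnion_le' _ _ _
      _ ≤ ∑ s ∈ Finset.range (N + 1), ENNReal.ofReal ((2 : ℝ) ^ (N * N) / (n : ℝ)) :=
          Finset.sum_le_sum key
      _ = (N + 1) • ENNReal.ofReal ((2 : ℝ) ^ (N * N) / (n : ℝ)) := by
          rw [Finset.sum_const, Finset.card_range]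
      _ ≤ ENNReal.ofReal (((N : ℝ) + 1) * 2 ^ (N * N) / (n : ℝ)) := by
          rw [nsmul_eq_mul, ← ENNReal.ofReal_natCast (N + 1),
            ← ENNReal.ofReal_mul (by positivity)]
          apply ENNReal.ofReal_le_ofReal
          push_cast
          rw [mul_div_assoc]
  calc erMeasure n p _ ≤ erMeasure n p (⋃ x ∈ A, {G : Fin n → Fin n → Bool | ∀ e ∈ x.2, G e.1 e.2 = true}) :=
        measure_mono hsub
    _ ≤ ∑ x ∈ A, erMeasure n p {G : Fin n → Fin n → Bool | ∀ e ∈ x.2, G e.1 e.2 = true} :=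
        measure_biUnion_finset_le A _
    _ ≤ ∑ x ∈ A, h x := Finset.sum_le_sum hterm
    _ ≤ ∑ x ∈ B, h x := Finset.sum_le_sum_of_subset hAB
    _ ≤ _ := hsumB
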